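/- In the setting of the Serdyukov–Christofides algorithm, ρ(T) + ρ(M) < (3/2)·ρ(L₀), where T is a minimum spanning tree, M is a minimum perfect matching on the odd-degree vertices of T, and L₀ is a minimum Hamiltonian cycle. -/

import Mathlib

open scoped Classical

/-- Cyclic weight of a closed tour given by the vertex list `l`:
the sum of `ρ` over consecutive pairs, including the pair closing the cycle. -/
def cycWeight {V : Type*} (ρ : V → V → ℝ) (l : List V) : ℝ :=
  ((l.zip (l.rotate 1)).map fun p => ρ p.1 p.2).sum

/-- The (cyclic) list of edges of a closed tour given by the vertex list `l`. -/
def cycEdges {V : Type*} (l : List V) : List (Sym2 V) :=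
  (l.zip (l.rotate 1)).map fun p => Sym2.mk p.1 p.2

/-- The list of endpoints of a list of matching pairs. -/
def matchVerts {V : Type*} (M : List (V × V)) : List V :=
  M.flatMap fun p => [p.1, p.2]

/-- `M` is a perfect matching on the vertex set `X`: a partition of `X` into pairs. -/
def IsPM {V : Type*} [DecidableEq V] (X : Finset V) (M : List (V × V)) : Prop :=
  (matchVerts M).Nodup ∧ (matchVerts M).toFinset = X

/-- The weight of a matching: the sum of weights of its pairs. -/
def mWeight {V : Type*} (ρ : V → V → ℝ) (M : List (V × V)) : ℝ :=
  (M.map fun p => ρ p.1 p.2).sum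

/-- Total edge weight of a graph. -/
noncomputable def gWeight {V : Type*} [Fintype V] (f : Sym2 V → ℝ) (T : SimpleGraph V) : ℝ :=
  ∑ e ∈ T.edgeSet.toFinset, f e

/-- The weight of a walk in the graph `G` with edge weights `f`
(edges are counted with multiplicity). -/
def walkWeight {V : Type*} (G : SimpleGraph V) (f : Sym2 V → ℝ) {u v : V} (p : G.Walk u v) : ℝ :=
  (p.edges.map f).sum

/-- Shortest-path distance between `i` and `j` (metric closure of `G`). -/
noncomputable def sdist {V : Type*} (G : SimpleGraph V) (f : Sym2 V → ℝ) (i j : V) : ℝ :=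
  sInf {x | ∃ p : G.Walk i j, x = walkWeight G f p}

/-!
Deleting one edge of the Hamiltonian cycle `L₀` leaves a Hamiltonian path, which is a spanning
tree; as edge weights are positive, `ρ(T) < ρ(L₀)`. Shortcutting `L₀` to the odd-degree vertices
of `T`, of which there is an even number, gives by the triangle inequality a cycle of weight at most
`ρ(L₀)` whose alternate edges form two perfect matchings on them; hence `2ρ(M) ≤ ρ(L₀)`.
-/

open List

section Weights

variable {V : Type*} (ρ : V → V → ℝ)

def pathWeight : List V → ℝ
  | a :: b :: l => ρ a b + pathWeight (b :: l)
  | _ => 0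

@[simp] lemma pathWeight_singleton (a : V) : pathWeight ρ [a] = 0 := rfl

@[simp] lemma pathWeight_cons_cons (a b : V) (l : List V) :
    pathWeight ρ (a :: b :: l) = ρ a b + pathWeight ρ (b :: l) := rfl

lemma pathWeight_eq_sum_zip :
    ∀ l : List V, pathWeight ρ l = ((l.zip l.tail).map fun p => ρ p.1 p.2).sum
  | [] | [_] => rfl
  | a :: b :: l => by simp [pathWeight_eq_sum_zip (b :: l)]

lemma pathWeight_concat : ∀ (l : List V) (hl : l ≠ []) (b : V),
    pathWeight ρ (l ++ [b]) = pathWeight ρ l + ρ (l.getLast hl) b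
  | [a], _, b => by simp
  | a :: c :: l, _, b => by
    have ih := pathWeight_concat (c :: l) (cons_ne_nil c l) b
    simp only [cons_append] at ih ⊢
    rw [pathWeight_cons_cons, ih, pathWeight_cons_cons, getLast_cons_cons, add_assoc]

@[simp] lemma cycWeight_nil : cycWeight ρ [] = 0 := rfl

lemma cycWeight_cons (a : V) (t : List V) :
    cycWeight ρ (a :: t) = pathWeight ρ (a :: t ++ [a]) := by
  have hrot : (a :: t).rotate 1 = t ++ [a] := by simp
  have hzip : (a :: t ++ [a]).zip (t ++ [a]) = (a :: t).zip (t ++ [a]) := by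
    simpa using zip_append (r₁ := [a]) (r₂ := []) (by simp : (a :: t).length = (t ++ [a]).length)
  rw [cycWeight, pathWeight_eq_sum_zip, hrot, ← hzip]
  rfl

lemma cycWeight_cons_eq_concat (a : V) (t : List V) :
    cycWeight ρ (a :: t) = cycWeight ρ (t ++ [a]) := by
  cases t with
  | nil => rfl
  | cons b s =>
    calc cycWeight ρ (a :: b :: s) = pathWeight ρ (b :: s ++ [a]) + ρ a b := by
          rw [cycWeight_cons, cons_append, cons_append, pathWeight_cons_cons, add_comm]
      _ = pathWeight ρ (b :: s ++ [a] ++ [b]) := by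
          rw [pathWeight_concat ρ (b :: s ++ [a]) (by simp)]; simp
      _ = cycWeight ρ (b :: s ++ [a]) := (cycWeight_cons ρ b (s ++ [a])).symm

lemma cycWeight_append_comm (l₁ l₂ : List V) :
    cycWeight ρ (l₁ ++ l₂) = cycWeight ρ (l₂ ++ l₁) := by
  induction l₁ generalizing l₂ with
  | nil => simp
  | cons a l₁ ih =>
    rw [cons_append, cycWeight_cons_eq_concat, append_assoc, ih]
    simp

lemma pathWeight_lt_cycWeight (hpos : ∀ i j, i ≠ j → 0 < ρ i j) :
    ∀ {l : List V}, l.Nodup → 2 ≤ l.length → pathWeight ρ l < cycWeight ρ l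
  | a :: b :: t, hl, _ => by
    have hlast : (a :: b :: t).getLast (cons_ne_nil _ _) ≠ a := by
      rw [getLast_cons_cons]
      exact fun h => (nodup_cons.1 hl).1 (h ▸ getLast_mem _)
    rw [cycWeight_cons, pathWeight_concat ρ _ (cons_ne_nil _ _)]
    linarith [hpos _ _ hlast]

variable {ρ} (htri : ∀ i j k, ρ i j ≤ ρ i k + ρ k j)
include htri

lemma pathWeight_le_of_sublist {l' l : List V} (h : l' <+ l) (a b : V) :
    pathWeight ρ (a :: l' ++ [b]) ≤ pathWeight ρ (a :: l ++ [b]) := by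
  induction h generalizing a with
  | slnil => exact le_rfl
  | @cons l' l c _ ih =>
    obtain ⟨d, m, hdm⟩ := exists_cons_of_ne_nil (append_ne_nil_of_right_ne_nil l (cons_ne_nil b []))
    calc pathWeight ρ (a :: l' ++ [b]) ≤ pathWeight ρ (a :: l ++ [b]) := ih a
      _ ≤ ρ a c + pathWeight ρ (c :: l ++ [b]) := by
        simp only [cons_append, hdm, pathWeight_cons_cons]
        linarith [htri a d c]
      _ = pathWeight ρ (a :: c :: l ++ [b]) := rfl
  | cons_cons c _ ih => simpa using ih c

lemma cycWeight_nonneg (l : List V) : 0 ≤ cycWeight ρ l := by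
  cases l with
  | nil => rfl
  | cons x r =>
    calc 0 ≤ ρ x x := by linarith [htri x x x]
      _ = pathWeight ρ (x :: [] ++ [x]) := by simp
      _ ≤ cycWeight ρ (x :: r) := by
        rw [cycWeight_cons]; exact pathWeight_le_of_sublist htri (nil_sublist r) x x

lemma cycWeight_le_of_sublist {l' l : List V} (h : l' <+ l) : cycWeight ρ l' ≤ cycWeight ρ l := by
  cases l' with
  | nil => simpa using cycWeight_nonneg htri l
  | cons x r =>
    obtain ⟨r₁, r₂, rfl, hx, hr⟩ := cons_sublist_iff.1 h
    obtain ⟨s₁, s₂, rfl⟩ := append_of_mem hx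
    have hsub : r <+ s₂ ++ r₂ ++ s₁ :=
      (hr.trans (sublist_append_right s₂ r₂)).trans (sublist_append_left _ s₁)
    calc cycWeight ρ (x :: r) ≤ cycWeight ρ (x :: (s₂ ++ r₂ ++ s₁)) := by
          rw [cycWeight_cons, cycWeight_cons]; exact pathWeight_le_of_sublist htri hsub x x
      _ = cycWeight ρ (s₁ ++ x :: s₂ ++ r₂) := by
          rw [← cons_append, cycWeight_append_comm]; simp

end Weights

section Matchings

variable {V : Type*}

def pairUp : List V → List (V × V)
  | a :: b :: l => (a, b) :: pairUp l
  | _ => []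

lemma matchVerts_pairUp : ∀ l : List V, Even l.length → matchVerts (pairUp l) = l
  | [], _ => rfl
  | [_], h => by simp at h
  | a :: b :: l, h => by
    have hl : Even l.length := by simpa [Nat.even_add_one] using h
    have ih := matchVerts_pairUp l hl
    simp only [matchVerts] at ih ⊢
    simp [pairUp, ih]

lemma isPM_pairUp [DecidableEq V] {l : List V} (hl : Even l.length) (hnd : l.Nodup) :
    IsPM l.toFinset (pairUp l) := by
  rw [IsPM, matchVerts_pairUp l hl]
  exact ⟨hnd, rfl⟩

variable (ρ : V → V → ℝ)

lemma mWeight_pairUp_add_mWeight_pairUp :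
    ∀ (a : V) (l : List V), Odd l.length → ∀ c : V,
      mWeight ρ (pairUp (a :: l)) + mWeight ρ (pairUp (l ++ [c])) = pathWeight ρ (a :: l ++ [c])
  | _, [], h, _ => by simp at h
  | a, [b], _, c => by simp [pairUp, mWeight]
  | a, b :: d :: l, h, c => by
    have ih := mWeight_pairUp_add_mWeight_pairUp d l (by simpa [Nat.odd_add_one] using h) c
    simp only [pairUp, mWeight, map_cons, sum_cons, cons_append, pathWeight_cons_cons] at ih ⊢
    linarith

lemma cycWeight_eq_mWeight_pairUp_add {l : List V} (hl : Even l.length) :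
    cycWeight ρ l = mWeight ρ (pairUp l) + mWeight ρ (pairUp (l.rotate 1)) := by
  cases l with
  | nil => simp [pairUp, mWeight]
  | cons a t =>
    have ht : Odd t.length := by simpa [Nat.even_add_one] using hl
    rw [cycWeight_cons, ← mWeight_pairUp_add_mWeight_pairUp ρ a t ht a]
    simp

variable [DecidableEq V] {ρ}

theorem two_mul_mWeight_le_cycWeight (htri : ∀ i j k, ρ i j ≤ ρ i k + ρ k j)
    {X : Finset V} (hX : Even X.card) {M : List (V × V)}
    (hMmin : ∀ M' : List (V × V), IsPM X M' → mWeight ρ M ≤ mWeight ρ M')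
    {L : List V} (hL : L.Nodup) (hXL : ∀ x ∈ X, x ∈ L) :
    2 * mWeight ρ M ≤ cycWeight ρ L := by
  set l := L.filter (· ∈ X)
  have hl : l.Nodup := hL.filter _
  have hlX : l.toFinset = X := by
    ext x
    simpa [l] using hXL x
  have hlen : Even l.length := by rwa [← toFinset_card_of_nodup hl, hlX]
  have hrotX : (l.rotate 1).toFinset = X := (toFinset_eq_of_perm _ _ (rotate_perm l 1)).trans hlX
  have h₁ := hMmin _ (hlX ▸ isPM_pairUp hlen hl)
  have h₂ := hMmin _ (hrotX ▸ isPM_pairUp (by rwa [length_rotate]) (nodup_rotate.2 hl))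
  calc 2 * mWeight ρ M ≤ mWeight ρ (pairUp l) + mWeight ρ (pairUp (l.rotate 1)) := by linarith
    _ = cycWeight ρ l := (cycWeight_eq_mWeight_pairUp_add ρ hlen).symm
    _ ≤ cycWeight ρ L := cycWeight_le_of_sublist htri filter_sublist

end Matchings

section PathGraph

variable {V : Type*}

def pathEdges : List V → List (Sym2 V)
  | a :: b :: l => s(a, b) :: pathEdges (b :: l)
  | _ => []

def pathGraphOfList (l : List V) : SimpleGraph V :=
  SimpleGraph.fromEdgeSet {e | e ∈ pathEdges l}

lemma mem_of_mem_pathEdges : ∀ {l : List V} {e : Sym2 V}, e ∈ pathEdges l → ∀ v ∈ e, v ∈ l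
  | [], _, he, _, _ | [_], _, he, _, _ => by simp [pathEdges] at he
  | a :: b :: l, e, he, v, hv => by
    rcases mem_cons.1 he with rfl | he
    · rcases Sym2.mem_iff.1 hv with rfl | rfl <;> simp
    · exact mem_cons_of_mem a (mem_of_mem_pathEdges he v hv)

lemma length_pathEdges : ∀ (a : V) (l : List V), (pathEdges (a :: l)).length = l.length
  | _, [] => rfl
  | _, b :: l => by simp [pathEdges, length_pathEdges b l]

lemma pathEdges_nodup : ∀ {l : List V}, l.Nodup → (pathEdges l).Nodup
  | [], _ | [_], _ => nodup_nil
  | a :: b :: l, h => by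
    refine nodup_cons.2 ⟨fun hab => ?_, pathEdges_nodup (nodup_cons.1 h).2⟩
    exact (nodup_cons.1 h).1 (mem_of_mem_pathEdges hab a (Sym2.mem_mk_left a b))

lemma not_isDiag_of_mem_pathEdges :
    ∀ {l : List V}, l.Nodup → ∀ e ∈ pathEdges l, ¬ e.IsDiag
  | [], _, _, he | [_], _, _, he => by simp [pathEdges] at he
  | a :: b :: l, h, e, he => by
    rcases mem_cons.1 he with rfl | he
    · rintro (rfl : a = b)
      exact (nodup_cons.1 h).1 mem_cons_self
    · exact not_isDiag_of_mem_pathEdges (nodup_cons.1 h).2 e he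

lemma edgeSet_pathGraphOfList {l : List V} (hl : l.Nodup) :
    (pathGraphOfList l).edgeSet = {e | e ∈ pathEdges l} := by
  rw [pathGraphOfList, SimpleGraph.edgeSet_fromEdgeSet, sdiff_eq_left,
    Set.disjoint_left]
  exact fun e he hdiag => not_isDiag_of_mem_pathEdges hl e he (Sym2.mem_diagSet.1 hdiag)

lemma reachable_pathGraphOfList :
    ∀ (a : V) (l : List V), ∀ v ∈ a :: l, (pathGraphOfList (a :: l)).Reachable a v
  | a, [], v, hv => by rw [mem_singleton.1 hv]
  | a, b :: l, v, hv => by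
    have hab : (pathGraphOfList (a :: b :: l)).Reachable a b := by
      by_cases h : a = b
      · rw [h]
      · exact SimpleGraph.Adj.reachable ((SimpleGraph.fromEdgeSet_adj _).2 ⟨mem_cons_self, h⟩)
    rcases mem_cons.1 hv with rfl | hv
    · rfl
    · have hmono : pathGraphOfList (b :: l) ≤ pathGraphOfList (a :: b :: l) :=
        SimpleGraph.fromEdgeSet_mono fun e he => mem_cons_of_mem _ he
      exact hab.trans ((reachable_pathGraphOfList b l v hv).mono hmono)

lemma connected_pathGraphOfList {l : List V} (hne : l ≠ []) (hspan : ∀ v, v ∈ l) :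
    (pathGraphOfList l).Connected := by
  obtain ⟨a, t, rfl⟩ := exists_cons_of_ne_nil hne
  have := Nonempty.intro a
  exact (SimpleGraph.connected_iff _).2 ⟨fun u v =>
    (reachable_pathGraphOfList a t u (hspan u)).symm.trans
      (reachable_pathGraphOfList a t v (hspan v)), this⟩

theorem isTree_pathGraphOfList [DecidableEq V] {l : List V} (hl : l.Nodup) (hne : l ≠ [])
    (hspan : ∀ v, v ∈ l) : (pathGraphOfList l).IsTree := by
  let e := hl.getEquivOfForallMemList l hspan
  have := Finite.of_equiv _ e
  refine SimpleGraph.isTree_iff_connected_and_card.2 ⟨connected_pathGraphOfList hne hspan, ?_⟩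
  obtain ⟨a, t, rfl⟩ := exists_cons_of_ne_nil hne
  rw [edgeSet_pathGraphOfList hl, ← Nat.card_congr e, Nat.card_fin, Nat.card_coe_set_eq,
    ← coe_toFinset, Set.ncard_coe_finset, toFinset_card_of_nodup (pathEdges_nodup hl),
    length_pathEdges, length_cons]

lemma gWeight_pathGraphOfList [Fintype V] (f : Sym2 V → ℝ) {l : List V} (hl : l.Nodup) :
    gWeight f (pathGraphOfList l) = ((pathEdges l).map f).sum := by
  rw [gWeight, ← sum_toFinset f (pathEdges_nodup hl)]
  congr 1
  ext e
  simp [edgeSet_pathGraphOfList hl]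

lemma sum_map_lift_pathEdges (ρ : V → V → ℝ) (hsym : ∀ i j, ρ i j = ρ j i) :
    ∀ l : List V, ((pathEdges l).map (Sym2.lift ⟨ρ, hsym⟩)).sum = pathWeight ρ l
  | [] | [_] => rfl
  | a :: b :: l => by simp [pathEdges, sum_map_lift_pathEdges ρ hsym (b :: l)]

end PathGraph

theorem tree_plus_matching_lt_general {V : Type*} [Fintype V] [DecidableEq V]
    (ρ : V → V → ℝ) (hpos : ∀ i j, i ≠ j → 0 < ρ i j) (hsym : ∀ i j, ρ i j = ρ j i)
    (htri : ∀ i j k, ρ i j ≤ ρ i k + ρ k j) (hV : 3 ≤ Fintype.card V)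
    (T : SimpleGraph V)
    (hTmin : ∀ T' : SimpleGraph V, T'.IsTree →
      gWeight (Sym2.lift ⟨ρ, hsym⟩) T ≤ gWeight (Sym2.lift ⟨ρ, hsym⟩) T')
    (M : List (V × V))
    (hMmin : ∀ M' : List (V × V),
      IsPM (Finset.univ.filter fun v => Odd (T.degree v)) M' →
        mWeight ρ M ≤ mWeight ρ M')
    (L₀ : List V) (hL₀ : L₀.Nodup) (hL₀span : L₀.toFinset = Finset.univ) :
    gWeight (Sym2.lift ⟨ρ, hsym⟩) T + mWeight ρ M < 3 / 2 * cycWeight ρ L₀ := by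
  have hspan : ∀ v, v ∈ L₀ := fun v => by
    rw [← List.mem_toFinset, hL₀span]; exact Finset.mem_univ v
  have hlen : 3 ≤ L₀.length := by
    rwa [← toFinset_card_of_nodup hL₀, hL₀span, Finset.card_univ]
  have hne : L₀ ≠ [] := ne_nil_of_length_pos (by omega)
  have htree : gWeight (Sym2.lift ⟨ρ, hsym⟩) T < cycWeight ρ L₀ :=
    calc gWeight (Sym2.lift ⟨ρ, hsym⟩) T
        ≤ gWeight (Sym2.lift ⟨ρ, hsym⟩) (pathGraphOfList L₀) :=
          hTmin _ (isTree_pathGraphOfList hL₀ hne hspan)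
      _ = pathWeight ρ L₀ := by
          rw [gWeight_pathGraphOfList _ hL₀, sum_map_lift_pathEdges]
      _ < cycWeight ρ L₀ := pathWeight_lt_cycWeight ρ hpos hL₀ (by omega)
  have hmatch : 2 * mWeight ρ M ≤ cycWeight ρ L₀ :=
    two_mul_mWeight_le_cycWeight htri (by convert T.even_card_odd_degree_vertices) hMmin hL₀
      fun x _ => hspan x
  linarith

/-- In the Serdyukov–Christofides setting, `ρ(T) + ρ(M) < (3/2)·ρ(L₀)`,
where `T` is a minimum spanning tree, `M` a minimum perfect matching on the
odd-degree vertices of `T`, and `L₀` a minimum Hamiltonian cycle. -/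
theorem tree_plus_matching_lt {V : Type*} [Fintype V] [DecidableEq V]
    (ρ : V → V → ℝ) (hpos : ∀ i j, i ≠ j → 0 < ρ i j) (hsym : ∀ i j, ρ i j = ρ j i)
    (htri : ∀ i j k, ρ i j ≤ ρ i k + ρ k j) (hV : 3 ≤ Fintype.card V)
    (T : SimpleGraph V) (hT : T.IsTree)
    (hTmin : ∀ T' : SimpleGraph V, T'.IsTree →
      gWeight (Sym2.lift ⟨ρ, hsym⟩) T ≤ gWeight (Sym2.lift ⟨ρ, hsym⟩) T')
    (M : List (V × V))
    (hM : IsPM (Finset.univ.filter fun v => Odd (T.degree v)) M)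
    (hMmin : ∀ M' : List (V × V),
      IsPM (Finset.univ.filter fun v => Odd (T.degree v)) M' →
        mWeight ρ M ≤ mWeight ρ M')
    (L₀ : List V) (hL₀ : L₀.Nodup) (hL₀span : L₀.toFinset = Finset.univ)
    (hL₀min : ∀ L : List V, L.Nodup → L.toFinset = Finset.univ →
      cycWeight ρ L₀ ≤ cycWeight ρ L) :
    gWeight (Sym2.lift ⟨ρ, hsym⟩) T + mWeight ρ M < 3 / 2 * cycWeight ρ L₀ :=
  tree_plus_matching_lt_general ρ hpos hsym htri hV T hTmin M hMmin L₀ hL₀ hL₀span
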